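/- Let W be the Witt vectors of a perfect field of characteristic p and g ∈ W[[t]] with g ≡ 1 mod (p, t)·W[[t]] — more precisely g(0) ≡ 1 mod p. Then log(g) := −∑_{n≥1} (1−g)ⁿ/n converges in the ring A_t of divided-power-bounded series, satisfies d(log g) = dg/g, and log(g)(0) ≡ 0 mod p. -/

import Mathlib

/-!
Write `h = 1 - g`. Since `h(0) ∈ p ℤ_[p]` and the coefficients of `h` are integral, the
ultrametric inequality bounds the `tᵏ`-coefficient of `hᵐ` by `p^{-(m-k)}`; as `|1/(m+1)| ≤ m+1`,
the series `-∑ hᵐ⁺¹/(m+1)` converges coefficientwise to some `L`. Termwise differentiation gives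
`L' = -∑ hᵐ h'`, which has integral coefficients, and `g L' = ∑ (hᵐ⁺¹ - hᵐ) h'` telescopes to
`-h' = g'`. Integrality of `L'` yields the divided-power bounds, because
`(n+1)! · coeff (n+1) L = n! · coeff n L'`, and `|coeff 0 L| ≤ sup |h(0)|ᵐ⁺¹ / |m+1| ≤ 1/p`
because `m + 1 ≤ pᵐ`.
-/

open PowerSeries Filter Nat

-- `W = ℤ_[p]` inside `K = ℚ_[p]`: a series lies in `W⟦t⟧` iff all its coefficients have norm
-- at most `1`, and `MemAt p f` says that `f` lies in `A_t`.
def MemAt (p : ℕ) [Fact p.Prime] (f : PowerSeries ℚ_[p]) : Prop :=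
  (∀ n : ℕ, ‖(n ! : ℚ_[p]) * PowerSeries.coeff (R := ℚ_[p]) n f‖ ≤ 1) ∧
  ∀ r : ℝ, 0 < r → r < 1 →
    Tendsto (fun n : ℕ => ‖PowerSeries.coeff (R := ℚ_[p]) n f‖ * r ^ n) atTop (nhds 0)

open scoped PowerSeries.WithPiTopology Topology

theorem HasSum.eq_sub_of_telescoping {G : Type*} [AddCommGroup G] [TopologicalSpace G]
    [IsTopologicalAddGroup G] [T2Space G] {f : ℕ → G} {a b : G}
    (hs : HasSum (fun n ↦ f (n + 1) - f n) a) (hf : Tendsto f atTop (𝓝 b)) : a = b - f 0 :=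
  tendsto_nhds_unique hs.tendsto_sum_nat <| by
    simpa only [Finset.sum_range_sub] using hf.sub_const (f 0)

theorem Padic.norm_natCast_inv_le {p : ℕ} [Fact p.Prime] {n : ℕ} (hn : n ≠ 0) :
    ‖(n : ℚ_[p])⁻¹‖ ≤ n := by
  rw [norm_inv, Padic.norm_eq_zpow_neg_valuation (by exact_mod_cast hn), Padic.valuation_natCast,
    zpow_neg, inv_inv, zpow_natCast]
  exact_mod_cast Nat.le_of_dvd (Nat.pos_of_ne_zero hn) pow_padicValNat_dvd

namespace PowerSeries

theorem hasSum_derivative {R ι : Type*} [CommSemiring R] [TopologicalSpace R]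
    [IsTopologicalSemiring R] {f : ι → R⟦X⟧} {a : R⟦X⟧} (hf : HasSum f a) :
    HasSum (fun i ↦ d⁄dX R (f i)) (d⁄dX R a) := by
  rw [WithPiTopology.hasSum_iff_hasSum_coeff] at hf ⊢
  intro n
  simpa only [coeff_derivative] using (hf (n + 1)).mul_right _

theorem derivative_inv_succ_smul_pow {K : Type*} [Field K] [CharZero K] (h : K⟦X⟧) (m : ℕ) :
    d⁄dX K ((m + 1 : K)⁻¹ • h ^ (m + 1)) = h ^ m * d⁄dX K h := by
  rw [Derivation.map_smul, derivative_pow, smul_eq_C_mul, add_tsub_cancel_right, ← mul_assoc,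
    ← mul_assoc, ← map_natCast (C (R := K)), ← map_mul, Nat.cast_succ,
    inv_mul_cancel₀ (Nat.cast_add_one_ne_zero m), map_one, one_mul]

section Ultrametric

variable {R : Type*} [NormedRing R] [IsUltrametricDist R]

theorem norm_coeff_pow_mul_le {h f : R⟦X⟧} {c : ℝ} (hc : c ≤ 1) (hh : ∀ n, ‖coeff n h‖ ≤ 1)
    (hh0 : ‖coeff 0 h‖ ≤ c) (hf : ∀ n, ‖coeff n f‖ ≤ 1) (m k : ℕ) :
    ‖coeff k (h ^ m * f)‖ ≤ c ^ (m - k) := by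
  have hc0 : 0 ≤ c := (norm_nonneg _).trans hh0
  induction m generalizing k with
  | zero => simpa using hf k
  | succ m ih =>
    rw [_root_.pow_succ', mul_assoc, coeff_mul]
    refine IsUltrametricDist.norm_sum_le_of_forall_le_of_nonneg (by positivity) fun ij hij ↦
      (norm_mul_le _ _).trans ?_
    rw [Finset.HasAntidiagonal.mem_antidiagonal] at hij
    obtain hi | hi := Nat.eq_zero_or_pos ij.1
    · calc ‖coeff ij.1 h‖ * ‖coeff ij.2 (h ^ m * f)‖ ≤ c * c ^ (m - ij.2) :=
            mul_le_mul (hi ▸ hh0) (ih _) (norm_nonneg _) hc0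
        _ ≤ c ^ (m + 1 - k) := by
            rw [← _root_.pow_succ']; exact pow_le_pow_of_le_one hc0 hc (by omega)
    · calc ‖coeff ij.1 h‖ * ‖coeff ij.2 (h ^ m * f)‖ ≤ 1 * c ^ (m - ij.2) :=
            mul_le_mul (hh _) (ih _) (norm_nonneg _) zero_le_one
        _ ≤ c ^ (m + 1 - k) := by
            rw [one_mul]; exact pow_le_pow_of_le_one hc0 hc (by omega)

theorem tendsto_pow_mul_nhds_zero {h f : R⟦X⟧} {c : ℝ} (hc : c < 1) (hh : ∀ n, ‖coeff n h‖ ≤ 1)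
    (hh0 : ‖coeff 0 h‖ ≤ c) (hf : ∀ n, ‖coeff n f‖ ≤ 1) :
    Tendsto (fun m ↦ h ^ m * f) atTop (𝓝 0) := by
  rw [WithPiTopology.tendsto_iff_coeff_tendsto]
  intro k
  rw [map_zero]
  exact squeeze_zero_norm (norm_coeff_pow_mul_le hc.le hh hh0 hf · k)
    ((tendsto_pow_atTop_nhds_zero_of_lt_one ((norm_nonneg _).trans hh0) hc).comp
      (tendsto_sub_atTop_nat k))

variable [NormOneClass R]

theorem norm_coeff_pow_le {h : R⟦X⟧} {c : ℝ} (hc : c ≤ 1) (hh : ∀ n, ‖coeff n h‖ ≤ 1)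
    (hh0 : ‖coeff 0 h‖ ≤ c) (m k : ℕ) : ‖coeff k (h ^ m)‖ ≤ c ^ (m - k) := by
  simpa using norm_coeff_pow_mul_le hc hh hh0 (f := 1) (fun n ↦ by
    rw [coeff_one]; split_ifs <;> simp) m k

end Ultrametric

theorem norm_coeff_derivative_le_one {R : Type*} [NormedCommRing R] [NormOneClass R]
    [IsUltrametricDist R] {f : R⟦X⟧} (hf : ∀ n, ‖coeff n f‖ ≤ 1) (n : ℕ) :
    ‖coeff n (d⁄dX R f)‖ ≤ 1 := by
  rw [coeff_derivative, ← Nat.cast_succ]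
  exact (norm_mul_le _ _).trans
    (mul_le_one₀ (hf _) (norm_nonneg _) (IsUltrametricDist.norm_natCast_le_one R _))

theorem norm_coeff_le_of_hasSum {R ι : Type*} [NormedRing R] [IsUltrametricDist R] [Nonempty ι]
    {f : ι → R⟦X⟧} {a : R⟦X⟧} {C : ℝ} (hf : HasSum f a) (hC : ∀ i n, ‖coeff n (f i)‖ ≤ C)
    (n : ℕ) : ‖coeff n a‖ ≤ C := by
  rw [← ((WithPiTopology.hasSum_iff_hasSum_coeff R).1 hf n).tsum_eq]
  exact IsUltrametricDist.norm_tsum_le_of_forall_le (hC · n)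

theorem hasSum_derivative_log {K : Type*} [Field K] [CharZero K] [TopologicalSpace K]
    [IsTopologicalSemiring K] {h L : K⟦X⟧}
    (hL : HasSum (fun m : ℕ ↦ -((m + 1 : K)⁻¹ • h ^ (m + 1))) L) :
    HasSum (fun m : ℕ ↦ -(h ^ m * d⁄dX K h)) (d⁄dX K L) := by
  simpa only [map_neg, derivative_inv_succ_smul_pow] using hasSum_derivative hL

theorem mul_derivative_eq_of_hasSum_log {K : Type*} [NormedField K] [IsUltrametricDist K]
    [CharZero K] {g L : K⟦X⟧} {c : ℝ} (hc : c < 1) (hh : ∀ n, ‖coeff n (1 - g)‖ ≤ 1)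
    (hh0 : ‖coeff 0 (1 - g)‖ ≤ c)
    (hL : HasSum (fun m : ℕ ↦ -((m + 1 : K)⁻¹ • (1 - g) ^ (m + 1))) L) :
    g * d⁄dX K L = d⁄dX K g := by
  set h := 1 - g with h_def
  have hterm (m : ℕ) : g * -(h ^ m * d⁄dX K h) = h ^ (m + 1) * d⁄dX K h - h ^ m * d⁄dX K h := by
    rw [h_def]
    ring
  have htel : HasSum (fun m : ℕ ↦ h ^ (m + 1) * d⁄dX K h - h ^ m * d⁄dX K h) (g * d⁄dX K L) := by
    simpa only [hterm] using (hasSum_derivative_log hL).mul_left g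
  have hlim : Tendsto (fun m ↦ h ^ m * d⁄dX K h) atTop (𝓝 0) :=
    tendsto_pow_mul_nhds_zero hc hh hh0 (norm_coeff_derivative_le_one hh)
  rw [htel.eq_sub_of_telescoping (f := fun m ↦ h ^ m * d⁄dX K h) hlim, zero_sub,
    pow_zero, one_mul, h_def, map_sub, Derivation.map_one_eq_zero, zero_sub, neg_neg]

variable {p : ℕ} [Fact p.Prime]

theorem summable_inv_succ_smul_pow {h : ℚ_[p]⟦X⟧} {c : ℝ} (hc : c < 1)
    (hh : ∀ n, ‖coeff n h‖ ≤ 1) (hh0 : ‖coeff 0 h‖ ≤ c) :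
    Summable (fun m : ℕ ↦ (m + 1 : ℚ_[p])⁻¹ • h ^ (m + 1)) := by
  rw [WithPiTopology.summable_iff_summable_coeff]
  intro k
  refine NonarchimedeanAddGroup.summable_of_tendsto_cofinite_zero ?_
  rw [Nat.cofinite_eq_atTop, ← tendsto_add_atTop_iff_nat k]
  have hc0 : 0 ≤ c := (norm_nonneg _).trans hh0
  have hbound (m : ℕ) : ‖coeff k (((m + k : ℕ) + 1 : ℚ_[p])⁻¹ • h ^ (m + k + 1))‖ ≤
      (k + 1) * ((m + 1 : ℕ) * c ^ (m + 1)) := by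
    rw [coeff_smul, smul_eq_mul, norm_mul, ← Nat.cast_succ]
    calc ‖((m + k + 1 : ℕ) : ℚ_[p])⁻¹‖ * ‖coeff k (h ^ (m + k + 1))‖
        ≤ (m + k + 1 : ℕ) * c ^ (m + 1) := by
          refine mul_le_mul (Padic.norm_natCast_inv_le (Nat.succ_ne_zero _)) ?_ (norm_nonneg _)
            (Nat.cast_nonneg _)
          exact (norm_coeff_pow_le hc.le hh hh0 (m + k + 1) k).trans_eq (by congr 1; omega)
      _ ≤ (k + 1) * ((m + 1 : ℕ) * c ^ (m + 1)) := by
          rw [← mul_assoc]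
          gcongr
          push_cast
          nlinarith [(m.cast_nonneg : (0 : ℝ) ≤ m), (k.cast_nonneg : (0 : ℝ) ≤ k)]
  refine squeeze_zero_norm hbound ?_
  simpa using ((tendsto_self_mul_const_pow_of_lt_one hc0 hc).comp
    (tendsto_add_atTop_nat 1)).const_mul ((k : ℝ) + 1)

theorem norm_constantCoeff_le_of_hasSum_log {h L : ℚ_[p]⟦X⟧} (hh0 : ‖coeff 0 h‖ ≤ (p : ℝ)⁻¹)
    (hL : HasSum (fun m : ℕ ↦ -((m + 1 : ℚ_[p])⁻¹ • h ^ (m + 1))) L) :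
    ‖coeff 0 L‖ ≤ (p : ℝ)⁻¹ := by
  have hp : 1 < p := (Fact.out : p.Prime).one_lt
  rw [← ((WithPiTopology.hasSum_iff_hasSum_coeff _).1 hL 0).tsum_eq]
  refine IsUltrametricDist.norm_tsum_le_of_forall_le fun m ↦ ?_
  rw [map_neg, norm_neg, coeff_smul, smul_eq_mul, norm_mul, coeff_zero_eq_constantCoeff_apply,
    map_pow, norm_pow, ← Nat.cast_succ, ← coeff_zero_eq_constantCoeff_apply]
  have hm : ((m + 1 : ℕ) : ℝ) ≤ (p : ℝ) ^ m := by exact_mod_cast Nat.lt_pow_self hp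
  calc ‖((m + 1 : ℕ) : ℚ_[p])⁻¹‖ * ‖coeff 0 h‖ ^ (m + 1)
      ≤ (p : ℝ) ^ m * (p : ℝ)⁻¹ ^ (m + 1) :=
        mul_le_mul ((Padic.norm_natCast_inv_le (Nat.succ_ne_zero m)).trans hm)
          (pow_le_pow_left₀ (norm_nonneg _) hh0 _) (by positivity) (by positivity)
    _ = (p : ℝ)⁻¹ := by
        rw [_root_.pow_succ, ← mul_assoc, ← mul_pow, mul_inv_cancel₀ (by positivity), one_pow,
          one_mul]

theorem memAt_of_norm_coeff_derivative_le_one {L : ℚ_[p]⟦X⟧} (hL0 : ‖coeff 0 L‖ ≤ 1)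
    (hL : ∀ n, ‖coeff n (d⁄dX ℚ_[p] L)‖ ≤ 1) : MemAt p L := by
  have hsucc (n : ℕ) : coeff (n + 1) L * ((n + 1 : ℕ) : ℚ_[p]) = coeff n (d⁄dX ℚ_[p] L) := by
    rw [coeff_derivative, Nat.cast_succ]
  have hcoeff (n : ℕ) : ‖coeff n L‖ ≤ n + 1 := by
    rcases n with _ | n
    · simpa using hL0
    · rw [(eq_mul_inv_iff_mul_eq₀ (Nat.cast_ne_zero.2 n.succ_ne_zero)).2 (hsucc n), norm_mul]
      calc ‖coeff n (d⁄dX ℚ_[p] L)‖ * ‖((n + 1 : ℕ) : ℚ_[p])⁻¹‖ ≤ 1 * (n + 1 : ℕ) :=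
            mul_le_mul (hL n) (Padic.norm_natCast_inv_le n.succ_ne_zero) (norm_nonneg _)
              zero_le_one
        _ ≤ (n + 1 : ℕ) + 1 := by linarith
  refine ⟨fun n ↦ ?_, fun r hr0 hr1 ↦ ?_⟩
  · rcases n with _ | n
    · simpa using hL0
    · rw [Nat.factorial_succ, Nat.cast_mul, mul_comm, ← mul_assoc, hsucc, norm_mul]
      exact mul_le_one₀ (hL n) (norm_nonneg _) (IsUltrametricDist.norm_natCast_le_one _ _)
  · refine squeeze_zero (fun n ↦ by positivity)
      (fun n ↦ mul_le_mul_of_nonneg_right (hcoeff n) (pow_nonneg hr0.le n)) ?_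
    simpa [add_mul] using (tendsto_self_mul_const_pow_of_lt_one hr0.le hr1).add
      (tendsto_pow_atTop_nhds_zero_of_lt_one hr0.le hr1)

end PowerSeries

theorem stmt4 (p : ℕ) [Fact p.Prime] (g : PowerSeries ℚ_[p])
    (hg : ∀ n : ℕ, ‖PowerSeries.coeff (R := ℚ_[p]) n g‖ ≤ 1)
    (hg0 : ‖PowerSeries.coeff (R := ℚ_[p]) 0 g - 1‖ ≤ (p : ℝ)⁻¹) :
    ∃ L : PowerSeries ℚ_[p],
      (∀ k : ℕ, HasSum
        (fun n : ℕ => -(PowerSeries.coeff (R := ℚ_[p]) k ((1 - g) ^ (n + 1)) / (n + 1)))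
        (PowerSeries.coeff (R := ℚ_[p]) k L)) ∧
      MemAt p L ∧
      g * PowerSeries.derivativeFun L = PowerSeries.derivativeFun g ∧
      ‖PowerSeries.coeff (R := ℚ_[p]) 0 L‖ ≤ (p : ℝ)⁻¹ := by
  have hp : (p : ℝ)⁻¹ < 1 := inv_lt_one_of_one_lt₀ (mod_cast (Fact.out : p.Prime).one_lt)
  have hh0 : ‖coeff 0 (1 - g)‖ ≤ (p : ℝ)⁻¹ := by
    rwa [map_sub, coeff_one, if_pos rfl, norm_sub_rev]
  have hh (n : ℕ) : ‖coeff n (1 - g)‖ ≤ 1 := by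
    rcases n with _ | n
    · exact hh0.trans hp.le
    · simpa [coeff_one] using hg (n + 1)
  obtain ⟨L, hL⟩ := (summable_inv_succ_smul_pow hp hh hh0).neg
  have hL0 := norm_constantCoeff_le_of_hasSum_log hh0 hL
  have hdL : ∀ n, ‖coeff n (d⁄dX ℚ_[p] L)‖ ≤ 1 :=
    norm_coeff_le_of_hasSum (hasSum_derivative_log hL) fun m n ↦ by
      simpa using norm_coeff_pow_mul_le le_rfl hh (hh 0) (norm_coeff_derivative_le_one hh) m n
  refine ⟨L, fun k ↦ ?_, memAt_of_norm_coeff_derivative_le_one (hL0.trans hp.le) hdL,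
    mul_derivative_eq_of_hasSum_log hp hh hh0 hL, hL0⟩
  simpa [div_eq_inv_mul] using (WithPiTopology.hasSum_iff_hasSum_coeff _).1 hL k
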